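/- Let φ̃ : [−1,1] → [−1,1] be 1-Lipschitz and odd, and φ̄(z) = z. Let two pair-processes (X̃^1 ≤ X̃^2) and (X̄^1 ≤ X̄^2) be constructed on the same i.i.d. uniform sequence, with conditional flip probabilities determined by h·φ̃ and h·φ̄ respectively (0 < h ≤ 1/2) applied to averages over the same finite sets S_t, starting from boundary conditions with X̃^i_s = X̄^i_s for s in the boundary. Then almost surely, for all t: if X̃^2_t ≠ X̃^1_t then X̄^2_t ≠ X̄^1_t; i.e., the linear-rule pair has at least as many discrepancies as the Lipschitz-rule pair. -/

import Mathlib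

/-!
Both pairs are driven by the same uniforms `u t`. A pair with rates `g₁, g₂` can disagree at
time `t` only if `u t < g₂ - g₁`, and does so whenever moreover `0 ≤ g₁` (true for the linear
rule as `h ≤ 1/2`). So it suffices to show, by strong induction on `t`, that the gap `X² - X¹` of
the `φ̃`-pair never exceeds that of the linear pair: given this on the past, the mean gaps over
`S t` compare the same way, and as `φ̃` is 1-Lipschitz,
`g̃(+|X̃²) - g̃(+|X̃¹) ≤ h (avg X̄² - avg X̄¹) / 2 = ḡ(+|X̄²) - ḡ(+|X̄¹)`.
-/

/-- The conditional probability of a `+` spin at time `t` for the majority rule `φ`,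
strength `h`, and dependence set `S`: `g(+|z) = (1/2)(1 + h·φ(avg of z over S))`. -/
noncomputable def gv (φ : ℝ → ℝ) (h : ℝ) (S : Finset ℤ) (z : ℤ → ℝ) : ℝ :=
  (1 / 2) * (1 + h * φ ((∑ s ∈ S, z s) / (S.card : ℝ)))

open Finset
open scoped BigOperators

section Coupling

noncomputable def upperSpin (u g₂ : ℝ) : ℝ := if u < g₂ then 1 else -1

noncomputable def lowerSpin (u g₁ g₂ : ℝ) : ℝ := if g₂ - g₁ ≤ u ∧ u < g₂ then 1 else -1

variable {u g₁ g₂ g₁' g₂' : ℝ}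

lemma lowerSpin_le_upperSpin : lowerSpin u g₁ g₂ ≤ upperSpin u g₂ := by
  unfold lowerSpin upperSpin
  split_ifs <;> grind

lemma neg_one_le_lowerSpin : -1 ≤ lowerSpin u g₁ g₂ := by
  unfold lowerSpin
  split_ifs <;> norm_num

lemma upperSpin_sub_lowerSpin_mono (hgap : g₂ - g₁ ≤ g₂' - g₁') (hg₁' : 0 ≤ g₁') :
    upperSpin u g₂ - lowerSpin u g₁ g₂ ≤ upperSpin u g₂' - lowerSpin u g₁' g₂' := by
  unfold lowerSpin upperSpin
  split_ifs <;> grind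

end Coupling

section Rates

variable {φ : ℝ → ℝ} {h : ℝ} {S : Finset ℤ} {z z₁ z₂ w₁ w₂ : ℤ → ℝ}

lemma gv_eq_expect (φ : ℝ → ℝ) (h : ℝ) (S : Finset ℤ) (z : ℤ → ℝ) :
    gv φ h S z = 1 / 2 * (1 + h * φ (𝔼 s ∈ S, z s)) := by
  rw [expect_eq_sum_div_card, gv]

lemma gv_id_nonneg (hh₀ : 0 ≤ h) (hh₁ : h ≤ 1) (hS : S.Nonempty) (hz : ∀ s ∈ S, -1 ≤ z s) :
    0 ≤ gv id h S z := by
  have hmean : -1 ≤ 𝔼 s ∈ S, z s := le_expect hS hz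
  rw [gv_eq_expect, id]
  nlinarith

lemma gv_sub_gv_le_gv_id_sub_gv_id (hlip : ∀ z₁ z₂, |φ z₂ - φ z₁| ≤ |z₂ - z₁|) (hh : 0 ≤ h)
    (hz : ∀ s ∈ S, z₁ s ≤ z₂ s) (hzw : ∀ s ∈ S, z₂ s - z₁ s ≤ w₂ s - w₁ s) :
    gv φ h S z₂ - gv φ h S z₁ ≤ gv id h S w₂ - gv id h S w₁ := by
  have hmono : 𝔼 s ∈ S, z₁ s ≤ 𝔼 s ∈ S, z₂ s := expect_le_expect hz
  have hgap : (𝔼 s ∈ S, z₂ s) - 𝔼 s ∈ S, z₁ s ≤ (𝔼 s ∈ S, w₂ s) - 𝔼 s ∈ S, w₁ s := by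
    simpa only [expect_sub_distrib] using expect_le_expect hzw
  have hφ : φ (𝔼 s ∈ S, z₂ s) - φ (𝔼 s ∈ S, z₁ s) ≤ (𝔼 s ∈ S, w₂ s) - 𝔼 s ∈ S, w₁ s :=
    calc φ (𝔼 s ∈ S, z₂ s) - φ (𝔼 s ∈ S, z₁ s)
        ≤ |(𝔼 s ∈ S, z₂ s) - 𝔼 s ∈ S, z₁ s| := (le_abs_self _).trans (hlip _ _)
      _ = (𝔼 s ∈ S, z₂ s) - 𝔼 s ∈ S, z₁ s := abs_of_nonneg (sub_nonneg.mpr hmono)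
      _ ≤ _ := hgap
  simp only [gv_eq_expect, id]
  nlinarith

end Rates

theorem stmt16_general (φt : ℝ → ℝ)
    (hlip : ∀ z₁ z₂, |φt z₂ - φt z₁| ≤ |z₂ - z₁|)
    (h : ℤ → ℝ) (hh : ∀ t, 0 < h t ∧ h t ≤ 1 / 2)
    (S : ℤ → Finset ℤ) (hS : ∀ t, (S t).Nonempty ∧ ∀ s ∈ S t, s < t)
    (u : ℤ → ℝ)
    (Xt1 Xt2 Xb1 Xb2 : ℤ → ℝ)
    (hbdry : ∀ s : ℤ, s < 0 →
      Xt1 s = Xb1 s ∧ Xt2 s = Xb2 s ∧ Xt1 s ≤ Xt2 s ∧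
      (Xt1 s = -1 ∨ Xt1 s = 1) ∧ (Xt2 s = -1 ∨ Xt2 s = 1))
    (hrec : ∀ t : ℤ, 0 ≤ t →
      (Xt2 t = if u t < gv φt (h t) (S t) Xt2 then 1 else -1) ∧
      (Xt1 t = if gv φt (h t) (S t) Xt2 - gv φt (h t) (S t) Xt1 ≤ u t ∧
                  u t < gv φt (h t) (S t) Xt2 then 1 else -1) ∧
      (Xb2 t = if u t < gv id (h t) (S t) Xb2 then 1 else -1) ∧
      (Xb1 t = if gv id (h t) (S t) Xb2 - gv id (h t) (S t) Xb1 ≤ u t ∧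
                  u t < gv id (h t) (S t) Xb2 then 1 else -1)) :
    ∀ t : ℤ, Xt1 t ≠ Xt2 t → Xb1 t ≠ Xb2 t := by
  have hordt : ∀ t, Xt1 t ≤ Xt2 t := fun t ↦ by
    rcases lt_or_ge t 0 with ht | ht
    · exact (hbdry t ht).2.2.1
    · obtain ⟨r2, r1, -, -⟩ := hrec t ht
      rw [r1, r2]
      exact lowerSpin_le_upperSpin
  have hXb1 : ∀ t, -1 ≤ Xb1 t := fun t ↦ by
    rcases lt_or_ge t 0 with ht | ht
    · obtain ⟨e1, -, -, hspin, -⟩ := hbdry t ht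
      rcases hspin with hspin | hspin <;> linarith
    · rw [(hrec t ht).2.2.2]
      exact neg_one_le_lowerSpin
  have hgap : ∀ t, Xt2 t - Xt1 t ≤ Xb2 t - Xb1 t := fun t ↦ by
    induction t using Int.strongRec (m := 0) with
    | lt t ht => obtain ⟨e1, e2, -⟩ := hbdry t ht; rw [e1, e2]
    | ge t ht ih =>
      obtain ⟨r2, r1, rb2, rb1⟩ := hrec t ht
      rw [r2, r1, rb2, rb1]
      refine upperSpin_sub_lowerSpin_mono ?_ ?_
      · exact gv_sub_gv_le_gv_id_sub_gv_id hlip (hh t).1.le (fun s _ ↦ hordt s)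
          fun s hs ↦ ih s ((hS t).2 s hs)
      · exact gv_id_nonneg (hh t).1.le (by linarith [(hh t).2]) (hS t).1 fun s _ ↦ hXb1 s
  intro t hne heq
  have := hgap t
  rw [heq, sub_self] at this
  exact hne (le_antisymm (hordt t) (by linarith))

/-- Discrepancy domination for the coupled pair dynamics: if the pair processes
`(X̃¹ ≤ X̃²)` (rule `φ̃`, 1-Lipschitz and odd) and `(X̄¹ ≤ X̄²)` (linear rule
`φ̄ = id`) are driven by the same uniforms `u` with the same boundary conditions,
then at every time a discrepancy of the `φ̃`-pair forces a discrepancy of the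
linear pair. -/
theorem stmt16 (φt : ℝ → ℝ)
    (hodd : ∀ z, φt (-z) = -φt z)
    (hlip : ∀ z₁ z₂, |φt z₂ - φt z₁| ≤ |z₂ - z₁|)
    (hrange : ∀ z ∈ Set.Icc (-1 : ℝ) 1, φt z ∈ Set.Icc (-1 : ℝ) 1)
    (h : ℤ → ℝ) (hh : ∀ t, 0 < h t ∧ h t ≤ 1 / 2)
    (S : ℤ → Finset ℤ) (hS : ∀ t, (S t).Nonempty ∧ ∀ s ∈ S t, s < t)
    (u : ℤ → ℝ) (hu : ∀ t, 0 ≤ u t ∧ u t ≤ 1)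
    (Xt1 Xt2 Xb1 Xb2 : ℤ → ℝ)
    (hbdry : ∀ s : ℤ, s < 0 →
      Xt1 s = Xb1 s ∧ Xt2 s = Xb2 s ∧ Xt1 s ≤ Xt2 s ∧
      (Xt1 s = -1 ∨ Xt1 s = 1) ∧ (Xt2 s = -1 ∨ Xt2 s = 1))
    (hrec : ∀ t : ℤ, 0 ≤ t →
      (Xt2 t = if u t < gv φt (h t) (S t) Xt2 then 1 else -1) ∧
      (Xt1 t = if gv φt (h t) (S t) Xt2 - gv φt (h t) (S t) Xt1 ≤ u t ∧
                  u t < gv φt (h t) (S t) Xt2 then 1 else -1) ∧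
      (Xb2 t = if u t < gv id (h t) (S t) Xb2 then 1 else -1) ∧
      (Xb1 t = if gv id (h t) (S t) Xb2 - gv id (h t) (S t) Xb1 ≤ u t ∧
                  u t < gv id (h t) (S t) Xb2 then 1 else -1)) :
    ∀ t : ℤ, Xt1 t ≠ Xt2 t → Xb1 t ≠ Xb2 t :=
  stmt16_general φt hlip h hh S hS u Xt1 Xt2 Xb1 Xb2 hbdry hrec
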